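/- arXiv:1605.03016 — 2 statements merged into one kernel-verified Lean document; each statement's English description precedes it below -/
import Mathlib

section
/- Let X be a topological space, Y a convex set in a topological vector space, and Z a nonempty set. Let P : X → 2^Z, Q : Y → 2^Z and T : Y → 2^X be correspondences satisfying: (a) there exists y_0 ∈ Y such that P(x) ∩ Q(y_0) ≠ ∅ for each x ∈ X; (b) T ∈ KKM(Y,X) is compact. Then there exist n ∈ ℕ with n ≥ 2, points y_1*,…,y_n* ∈ Y, a point y* ∈ co{y_1*,…,y_n*}, and x* ∈ T(y*) such that P(x*) ∩ Q(y_i*) ≠ ∅ for each i ∈ {1,…,n}. -/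
/-! Put `G y = {x | P x ∩ Q y = ∅}`. By (a), `G y₀ = ∅`, so the KKM property of `T` applied to the
singleton `{y₀}` shows that `G` cannot be a generalized KKM mapping w.r.t. `T`. A witness of this
failure is a finite `A ⊆ Y`, a point `y ∈ co A` and `x ∈ T y` with `P x ∩ Q a ≠ ∅` for all
`a ∈ A`; listing `A` with repetitions gives at least two points `yᵢ*`. -/

open Set

/-- `G` is a generalized KKM mapping with respect to `T`: for every nonempty
finite subset `A` of `Y`, `⋃_{y ∈ co A} T(y) ⊆ ⋃_{a ∈ A} G(a)`. -/
def IsGenKKM {V X : Type*} [AddCommGroup V] [Module ℝ V]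
    (Y : Set V) (T G : V → Set X) : Prop :=
  ∀ A : Finset V, A.Nonempty → (A : Set V) ⊆ Y →
    ∀ y ∈ convexHull ℝ (A : Set V), T y ⊆ ⋃ a ∈ A, G a

/-- `T ∈ KKM(Y,X)`: for every correspondence `G` that is a generalized KKM
mapping w.r.t. `T`, the family `{cl G(y) : y ∈ Y}` has the finite intersection
property. -/
def HasKKMProperty {V X : Type*} [AddCommGroup V] [Module ℝ V] [TopologicalSpace X]
    (Y : Set V) (T : V → Set X) : Prop :=
  ∀ G : V → Set X, IsGenKKM Y T G →
    ∀ B : Finset V, B.Nonempty → (B : Set V) ⊆ Y →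
      (⋂ y ∈ B, closure (G y)).Nonempty

theorem Finset.exists_two_le_fin_range_eq {α : Type*} {A : Finset α} (hA : A.Nonempty) :
    ∃ n : ℕ, 2 ≤ n ∧ ∃ ys : Fin n → α, Set.range ys = A := by
  obtain ⟨a, ha⟩ := hA
  let l := A.toList ++ [a, a]
  refine ⟨l.length, by simp [l], l.get, ?_⟩
  ext x
  simp [l, or_iff_left_of_imp (fun h : x = a => h ▸ ha)]

theorem HasKKMProperty.exists_forall_notMem {V X : Type*} [AddCommGroup V] [Module ℝ V]
    [TopologicalSpace X] {Y : Set V} {T G : V → Set X} (hT : HasKKMProperty Y T) {y₀ : V}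
    (hy₀ : y₀ ∈ Y) (hG : G y₀ = ∅) :
    ∃ A : Finset V, A.Nonempty ∧ ↑A ⊆ Y ∧
      ∃ y ∈ convexHull ℝ (A : Set V), ∃ x ∈ T y, ∀ a ∈ A, x ∉ G a := by
  have hnot : ¬ IsGenKKM Y T G := fun hKKM => by
    simpa [hG] using hT G hKKM {y₀} (Finset.singleton_nonempty y₀) (by simpa using hy₀)
  simpa [IsGenKKM, not_subset] using hnot

theorem statement8_general {X V Z : Type*} [TopologicalSpace X]
    [AddCommGroup V] [Module ℝ V]
    (Y : Set V)
    (P : X → Set Z) (Q : V → Set Z) (T : V → Set X)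
    -- (a) there exists y₀ ∈ Y such that P(x) ∩ Q(y₀) ≠ ∅ for each x ∈ X
    (ha : ∃ y₀ ∈ Y, ∀ x : X, (P x ∩ Q y₀).Nonempty)
    -- (b) T ∈ KKM(Y,X) is compact
    (hb₁ : HasKKMProperty Y T) :
    ∃ n : ℕ, 2 ≤ n ∧ ∃ ys : Fin n → V, (∀ i, ys i ∈ Y) ∧
      ∃ ystar ∈ convexHull ℝ (Set.range ys), ∃ xstar ∈ T ystar,
        ∀ i, (P xstar ∩ Q (ys i)).Nonempty := by
  obtain ⟨y₀, hy₀Y, hy₀⟩ := ha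
  obtain ⟨A, hA, hAY, y, hy, x, hx, hxA⟩ :=
    hb₁.exists_forall_notMem (G := fun y => {x | ¬ (P x ∩ Q y).Nonempty}) hy₀Y
      (eq_empty_of_forall_notMem fun x hx => hx (hy₀ x))
  obtain ⟨n, hn, ys, hys⟩ := A.exists_two_le_fin_range_eq hA
  have hysA : ∀ i, ys i ∈ A := fun i => hys.subset (mem_range_self i)
  refine ⟨n, hn, ys, fun i => hAY (hysA i), y, hys ▸ hy, x, hx, fun i => ?_⟩
  exact not_not.mp (hxA _ (hysA i))

/-- Theorem 9: a coincidence-like theorem. -/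
theorem statement8 {X V Z : Type*} [TopologicalSpace X]
    [AddCommGroup V] [Module ℝ V] [TopologicalSpace V]
    [IsTopologicalAddGroup V] [ContinuousSMul ℝ V]
    [Nonempty Z]
    (Y : Set V) (hYcv : Convex ℝ Y)
    (P : X → Set Z) (Q : V → Set Z) (T : V → Set X)
    -- (a) there exists y₀ ∈ Y such that P(x) ∩ Q(y₀) ≠ ∅ for each x ∈ X
    (ha : ∃ y₀ ∈ Y, ∀ x : X, (P x ∩ Q y₀).Nonempty)
    -- (b) T ∈ KKM(Y,X) is compact
    (hb₁ : HasKKMProperty Y T)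
    (hb₂ : IsCompact (closure (⋃ y ∈ Y, T y))) :
    ∃ n : ℕ, 2 ≤ n ∧ ∃ ys : Fin n → V, (∀ i, ys i ∈ Y) ∧
      ∃ ystar ∈ convexHull ℝ (Set.range ys), ∃ xstar ∈ T ystar,
        ∀ i, (P xstar ∩ Q (ys i)).Nonempty :=
  statement8_general Y P Q T ha hb₁
end

section
/- Let X be a topological space, Y a convex set in a topological vector space, and Z a nonempty set. Let P : X → 2^Z, Q : Y → 2^Z and T : Y → 2^X be correspondences satisfying: (a) T is properly quasi-convex w.r.t. G, where G : Y → 2^X is defined by G(y) = {x ∈ X : P(x) ∩ Q(y) = ∅}; (b) T ∈ KKM(Y,X) is compact. Then for each y ∈ Y there exists x_0 ∈ X such that P(x_0) ∩ Q(y) = ∅. -/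
open Set

/-!
Proper quasi-convexity of `T` w.r.t. `G` makes `G` a generalized KKM mapping w.r.t. `T`. The KKM
property of `T`, applied to the singleton `{y}`, then gives `cl G(y) ≠ ∅`, hence `G(y) ≠ ∅`.
-/

def IsProperlyQuasiConvex {V X : Type*} [AddCommGroup V] [Module ℝ V]
    (Y : Set V) (T G : V → Set X) : Prop :=
  ∀ n : ℕ, 2 ≤ n → ∀ ys : Fin n → V, (∀ i, ys i ∈ Y) →
    ∀ y ∈ convexHull ℝ (range ys), ∃ i, T y ⊆ G (ys i)

/-- Repeating one element of `A` gives length at least two even when `A` is a singleton. -/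
theorem Finset.exists_two_le_range_eq {α : Type*} {A : Finset α} (hA : A.Nonempty) :
    ∃ n, 2 ≤ n ∧ ∃ ys : Fin n → α, Set.range ys = A := by
  obtain ⟨a, ha⟩ := hA
  refine ⟨A.card + 1, by simpa using Finset.card_pos.mpr ⟨a, ha⟩,
    Fin.cons a fun i => (A.equivFin.symm i : α), ?_⟩
  have hrange : Set.range (fun i => (A.equivFin.symm i : α)) = A :=
    (A.equivFin.symm.surjective.range_comp _).trans Subtype.range_coe
  rw [Fin.range_cons, hrange, Set.insert_eq_of_mem (Finset.mem_coe.mpr ha)]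

theorem IsProperlyQuasiConvex.isGenKKM {V X : Type*} [AddCommGroup V] [Module ℝ V]
    {Y : Set V} {T G : V → Set X} (h : IsProperlyQuasiConvex Y T G) : IsGenKKM Y T G := by
  intro A hA hAY y hy
  obtain ⟨n, hn, ys, hys⟩ := Finset.exists_two_le_range_eq hA
  have hysA : ∀ i, ys i ∈ A := fun i => Finset.mem_coe.mp (hys ▸ mem_range_self i)
  obtain ⟨i, hi⟩ := h n hn ys (fun i => hAY (hysA i)) y (hys ▸ hy)
  exact hi.trans (subset_biUnion_of_mem (hysA i))

theorem HasKKMProperty.nonempty_of_isGenKKM {V X : Type*} [AddCommGroup V] [Module ℝ V]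
    [TopologicalSpace X] {Y : Set V} {T G : V → Set X} (hT : HasKKMProperty Y T)
    (hG : IsGenKKM Y T G) {y : V} (hy : y ∈ Y) : (G y).Nonempty := by
  have hcl := hT G hG {y} (Finset.singleton_nonempty y) (by simpa using hy)
  simp only [Finset.mem_singleton, iInter_iInter_eq_left] at hcl
  exact closure_nonempty_iff.mp hcl

theorem statement9_general {X V Z : Type*} [TopologicalSpace X]
    [AddCommGroup V] [Module ℝ V]
    (Y : Set V)
    (P : X → Set Z) (Q : V → Set Z) (T : V → Set X)
    -- G(y) = {x ∈ X : P(x) ∩ Q(y) = ∅}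
    (G : V → Set X) (hG : ∀ y, G y = {x : X | P x ∩ Q y = ∅})
    -- (a) T is properly quasi-convex w.r.t. G
    (ha : ∀ n : ℕ, 2 ≤ n → ∀ ys : Fin n → V, (∀ i, ys i ∈ Y) →
      ∀ y ∈ convexHull ℝ (Set.range ys), ∃ i, T y ⊆ G (ys i))
    -- (b) T ∈ KKM(Y,X) is compact
    (hb₁ : HasKKMProperty Y T) :
    ∀ y ∈ Y, ∃ x₀ : X, P x₀ ∩ Q y = ∅ := by
  intro y hy
  have hGKKM : IsGenKKM Y T G := IsProperlyQuasiConvex.isGenKKM ha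
  obtain ⟨x₀, hx₀⟩ := hb₁.nonempty_of_isGenKKM hGKKM hy
  exact ⟨x₀, by simpa [hG] using hx₀⟩

/-- Theorem 10: existence of elements `x₀` with `P(x₀) ∩ Q(y) = ∅`. -/
theorem statement9 {X V Z : Type*} [TopologicalSpace X]
    [AddCommGroup V] [Module ℝ V] [TopologicalSpace V]
    [IsTopologicalAddGroup V] [ContinuousSMul ℝ V]
    [Nonempty Z]
    (Y : Set V) (hYcv : Convex ℝ Y)
    (P : X → Set Z) (Q : V → Set Z) (T : V → Set X)
    -- G(y) = {x ∈ X : P(x) ∩ Q(y) = ∅}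
    (G : V → Set X) (hG : ∀ y, G y = {x : X | P x ∩ Q y = ∅})
    -- (a) T is properly quasi-convex w.r.t. G
    (ha : ∀ n : ℕ, 2 ≤ n → ∀ ys : Fin n → V, (∀ i, ys i ∈ Y) →
      ∀ y ∈ convexHull ℝ (Set.range ys), ∃ i, T y ⊆ G (ys i))
    -- (b) T ∈ KKM(Y,X) is compact
    (hb₁ : HasKKMProperty Y T)
    (hb₂ : IsCompact (closure (⋃ y ∈ Y, T y))) :
    ∀ y ∈ Y, ∃ x₀ : X, P x₀ ∩ Q y = ∅ :=
  statement9_general Y P Q T G hG ha hb₁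
end
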